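/- Let d ≥ 3 and n ≥ 2d+1 be integers. In B_n define h = (σ_{n−3} σ_{n−4} ⋯ σ_{2d−4}) · σ_{2d−5}² · (σ_{2d−4} σ_{2d−3} ⋯ σ_{n−4}) · σ_{n−3}² · (σ_{n−4} σ_{n−5} ⋯ σ_{2d−4}) · σ_{2d−5}, where the first and third parenthesized products run over decreasing indices from n−3 (respectively n−4) down to 2d−4 and the second runs over increasing indices from 2d−4 up to n−4, and set d_{n−3} = h⁻¹ σ_{n−4} h. Then, under the Hurwitz action on (S_d)^n, (d_{n−3} σ_{n−2}⁻¹) · c⁰ = c⁰; that is, the element d_{n−3} σ_{n−2}⁻¹ (the normal generator of the kernel of the lifting homomorphism arising from the lantern relation) is liftable with respect to the standard coloring. -/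

import Mathlib

/-- The `i`-th Hurwitz move on `n`-tuples of elements of a group `G`:
it replaces `(…, cᵢ, cᵢ₊₁, …)` by `(…, cᵢ cᵢ₊₁ cᵢ⁻¹, cᵢ, …)` and is the
identity when `i + 1 ≥ n`. -/
def hurwitzMove {G : Type*} [Group G] {n : ℕ} (i : ℕ) (c : Fin n → G) : Fin n → G :=
  fun k =>
    if _h1 : (k : ℕ) = i then
      if h2 : i + 1 < n then
        c ⟨i, Nat.lt_of_succ_lt h2⟩ * c ⟨i + 1, h2⟩ * (c ⟨i, Nat.lt_of_succ_lt h2⟩)⁻¹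
      else c k
    else if h2 : (k : ℕ) = i + 1 then
      c ⟨i, by have := k.isLt; omega⟩
    else c k

/-- The braid relations on the free group on `n - 1` generators `σ_0, …, σ_{n-2}`:
commutation `σ_i σ_j = σ_j σ_i` for `|i - j| ≥ 2` and the braid relation
`σ_i σ_{i+1} σ_i = σ_{i+1} σ_i σ_{i+1}`. -/
def braidRels (n : ℕ) : Set (FreeGroup (Fin (n - 1))) :=
  {r | (∃ i j : Fin (n - 1), (i : ℕ) + 2 ≤ (j : ℕ) ∧
          r = FreeGroup.of i * FreeGroup.of j * (FreeGroup.of i)⁻¹ * (FreeGroup.of j)⁻¹) ∨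
       (∃ i j : Fin (n - 1), (j : ℕ) = (i : ℕ) + 1 ∧
          r = FreeGroup.of i * FreeGroup.of j * FreeGroup.of i *
              (FreeGroup.of j * FreeGroup.of i * FreeGroup.of j)⁻¹)}

/-- The braid group `B_n`, presented on generators `σ_0, …, σ_{n-2}` subject to
the braid relations. -/
abbrev BraidGroup (n : ℕ) := PresentedGroup (braidRels n)

/-- The Artin generator `σ_i` of the braid group `B_n` (equal to `1` if `i` is
out of range). -/
def braidGen (n i : ℕ) : BraidGroup n :=
  if h : i < n - 1 then PresentedGroup.of (⟨i, h⟩ : Fin (n - 1)) else 1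

/-- `φ` is the Hurwitz action of `B_n` on `G^n`, i.e. the group action under
which each Artin generator `σ_i` acts by the Hurwitz move `h_i`. -/
def IsHurwitzAction {G : Type*} [Group G] {n : ℕ}
    (φ : BraidGroup n →* Equiv.Perm (Fin n → G)) : Prop :=
  ∀ i : ℕ, i + 1 < n → ∀ c : Fin n → G, φ (braidGen n i) c = hurwitzMove i c

/-- The standard tuple `c⁰ ∈ (S_d)^n` (for `d ≥ 2`, `n ≥ 2d - 2`):
`c⁰_{2k} = c⁰_{2k+1}` is the transposition `(d-1-k, d-k)` for `0 ≤ k ≤ d-3`,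
and `c⁰_i` is the transposition `(1, 2)` for `2d-4 ≤ i ≤ n-1`.  Points of
`{1, …, d}` are represented by `Fin d` via `m ↦ m - 1`. -/
def stdTuple (d n : ℕ) : Fin n → Equiv.Perm (Fin d) := fun i =>
  if h : (i : ℕ) + 4 ≤ 2 * d then
    Equiv.swap ⟨d - 2 - (i : ℕ) / 2, by omega⟩ ⟨d - 1 - (i : ℕ) / 2, by omega⟩
  else if h2 : 2 ≤ d then Equiv.swap ⟨0, by omega⟩ ⟨1, by omega⟩ else 1

/-- `h = (σ_{n-3} σ_{n-4} ⋯ σ_{2d-4}) · σ_{2d-5}² · (σ_{2d-4} σ_{2d-3} ⋯ σ_{n-4}) ·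
σ_{n-3}² · (σ_{n-4} σ_{n-5} ⋯ σ_{2d-4}) · σ_{2d-5}`, where the first and third
products run over decreasing indices and the second over increasing indices. -/
def lanternConjWord (n d : ℕ) : BraidGroup n :=
  ((List.range (n - 2 * d + 2)).map (fun t => braidGen n (n - 3 - t))).prod *
    braidGen n (2 * d - 5) ^ 2 *
    ((List.range (n - 2 * d + 1)).map (fun t => braidGen n (2 * d - 4 + t))).prod *
    braidGen n (n - 3) ^ 2 *
    ((List.range (n - 2 * d + 1)).map (fun t => braidGen n (n - 4 - t))).prod *
    braidGen n (2 * d - 5)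

/-- `d_{n-3} = h⁻¹ σ_{n-4} h`. -/
def lanternD (n d : ℕ) : BraidGroup n :=
  (lanternConjWord n d)⁻¹ * braidGen n (n - 4) * lanternConjWord n d

/-!
Write `m = 2d - 5`. Regrouping the letters of `h` gives `h = R · σ_m · L · R` with
`R = σ_{n-3} ⋯ σ_m` and `L = σ_{m+1} ⋯ σ_{n-3}`. Under the Hurwitz action `R` carries the entry at
position `m` rightwards to position `n - 2`, conjugating every entry it passes by itself, and `L`
carries the entry at position `n - 2` leftwards to position `m + 1`. As `c⁰` is constant from
position `m + 1` on, every sweep leaves a constant block behind it; after the last `R` the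
positions `m, …, n - 3` all carry the same entry, so `σ_{n-4}` fixes `h · c⁰`, that is, `d_{n-3}`
fixes `c⁰`. Finally `σ_{n-2}` fixes `c⁰` because `c⁰_{n-2} = c⁰_{n-1}`.
-/

section Hurwitz

variable {G : Type*} [Group G] {n : ℕ}

theorem hurwitzMove_apply {i : ℕ} (hi : i + 1 < n) (c : Fin n → G) (k : Fin n) :
    hurwitzMove i c k =
      if (k : ℕ) = i then c ⟨i, by omega⟩ * c ⟨i + 1, hi⟩ * (c ⟨i, by omega⟩)⁻¹
      else if (k : ℕ) = i + 1 then c ⟨i, by omega⟩ else c k := by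
  unfold hurwitzMove
  split_ifs <;> rfl

theorem hurwitzMove_eq_self {i : ℕ} (hi : i + 1 < n) (c : Fin n → G)
    (h : c ⟨i, by omega⟩ = c ⟨i + 1, hi⟩) : hurwitzMove i c = c := by
  funext k
  rw [hurwitzMove_apply hi]
  split_ifs with h₁ h₂
  · rw [← h, mul_inv_cancel_right]
    exact congrArg c (Fin.ext h₁.symm)
  · rw [h]
    exact congrArg c (Fin.ext h₂.symm)
  · rfl

end Hurwitz

def braidDesc (n top K : ℕ) : BraidGroup n :=
  ((List.range K).map fun t => braidGen n (top - t)).prod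

def braidAsc (n lo K : ℕ) : BraidGroup n :=
  ((List.range K).map fun t => braidGen n (lo + t)).prod

theorem braidDesc_succ (n top K : ℕ) :
    braidDesc n top (K + 1) = braidDesc n top K * braidGen n (top - K) := by
  simp [braidDesc, List.range_succ]

theorem braidDesc_succ' (n top K : ℕ) :
    braidDesc n top (K + 1) = braidGen n top * braidDesc n (top - 1) K := by
  simp only [braidDesc, List.range_succ_eq_map, List.map_cons, List.map_map, List.prod_cons,
    Nat.sub_zero]
  congr 3
  funext t
  simp [Nat.sub_sub, add_comm]

theorem braidAsc_succ (n lo K : ℕ) :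
    braidAsc n lo (K + 1) = braidAsc n lo K * braidGen n (lo + K) := by
  simp [braidAsc, List.range_succ]

theorem lanternConjWord_eq {n d : ℕ} (hd : 3 ≤ d) (hn : 2 * d + 1 ≤ n) :
    lanternConjWord n d =
      braidDesc n (n - 3) (n - 2 * d + 3) * braidGen n (2 * d - 5) *
        braidAsc n (2 * d - 4) (n - 2 * d + 2) * braidDesc n (n - 3) (n - 2 * d + 3) := by
  have hR : braidDesc n (n - 3) (n - 2 * d + 3) =
      braidDesc n (n - 3) (n - 2 * d + 2) * braidGen n (2 * d - 5) := by
    rw [braidDesc_succ, show n - 3 - (n - 2 * d + 2) = 2 * d - 5 by omega]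
  have hR' : braidDesc n (n - 3) (n - 2 * d + 3) =
      braidGen n (n - 3) * braidDesc n (n - 4) (n - 2 * d + 1) * braidGen n (2 * d - 5) := by
    rw [braidDesc_succ', braidDesc_succ, show n - 3 - 1 = n - 4 by omega,
      show n - 4 - (n - 2 * d + 1) = 2 * d - 5 by omega, mul_assoc]
  have hL : braidAsc n (2 * d - 4) (n - 2 * d + 2) =
      braidAsc n (2 * d - 4) (n - 2 * d + 1) * braidGen n (n - 3) := by
    rw [braidAsc_succ, show 2 * d - 4 + (n - 2 * d + 1) = n - 3 by omega]
  rw [hL]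
  nth_rw 2 [hR']
  rw [hR]
  simp only [lanternConjWord, braidDesc, braidAsc, pow_two, mul_assoc]

namespace IsHurwitzAction

variable {G : Type*} [Group G] {n : ℕ} {φ : BraidGroup n →* Equiv.Perm (Fin n → G)}

theorem braidDesc_apply (hφ : IsHurwitzAction φ) {lo K top : ℕ} (htop : top + 1 = lo + K)
    (hK : lo + K < n) {c : Fin n → G} {a : G} (hc : ∀ k : Fin n, lo < k → k ≤ lo + K → c k = a)
    (k : Fin n) :
    φ (braidDesc n top K) c k =
      if lo ≤ k ∧ k < lo + K then c ⟨lo, by omega⟩ * a * (c ⟨lo, by omega⟩)⁻¹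
      else if (k : ℕ) = lo + K then c ⟨lo, by omega⟩ else c k := by
  obtain rfl : top = lo + K - 1 := by omega
  clear htop
  induction K generalizing k with
  | zero =>
    simp only [braidDesc, List.range_zero, List.map_nil, List.prod_nil, map_one,
      Equiv.Perm.coe_one, id_eq]
    split_ifs with _ h₂
    · omega
    · obtain rfl : k = ⟨lo, by omega⟩ := Fin.ext h₂
      rfl
    · rfl
  | succ K ih =>
    have hK' : lo + K + 1 < n := by omega
    have ih' := ih (by omega) (fun k h₁ h₂ => hc k h₁ (by omega))
    rw [show lo + (K + 1) - 1 = lo + K by omega, braidDesc_succ', map_mul, Equiv.Perm.mul_apply,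
      hφ _ hK', hurwitzMove_apply hK', ih', ih', ih', hc ⟨lo + K + 1, hK'⟩ (by simp) le_rfl]
    dsimp only
    split_ifs <;> first | omega | rfl

theorem braidAsc_apply (hφ : IsHurwitzAction φ) {lo K : ℕ} (hK : lo + K < n) {c : Fin n → G}
    {a : G} (hc : ∀ k : Fin n, lo ≤ k → k < lo + K → c k = a) (k : Fin n) :
    φ (braidAsc n lo K) c k =
      if (k : ℕ) = lo then a ^ K * c ⟨lo + K, hK⟩ * (a ^ K)⁻¹
      else if lo < k ∧ k ≤ lo + K then a else c k := by
  induction K generalizing c k with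
  | zero =>
    simp only [braidAsc, List.range_zero, List.map_nil, List.prod_nil, map_one,
      Equiv.Perm.coe_one, id_eq, pow_zero, one_mul, inv_one, mul_one]
    split_ifs with h₁ h₂
    · exact congrArg c (Fin.ext h₁)
    · omega
    · rfl
  | succ K ih =>
    have hK' : lo + K + 1 < n := by omega
    have hc' : ∀ k : Fin n, lo ≤ k → k < lo + K → hurwitzMove (lo + K) c k = a := by
      intro k h₁ h₂
      rw [hurwitzMove_apply hK', if_neg (by omega), if_neg (by omega), hc k h₁ (by omega)]
    rw [braidAsc_succ, map_mul, Equiv.Perm.mul_apply, hφ _ hK', ih (by omega) hc',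
      hurwitzMove_apply hK', hurwitzMove_apply hK', hc ⟨lo + K, by omega⟩ (by simp) (by simp)]
    dsimp only
    split_ifs <;> first | omega | rfl | group

theorem lanternConjWord_apply_eq (hφ : IsHurwitzAction φ) {d : ℕ} (hd : 3 ≤ d)
    (hn : 2 * d + 1 ≤ n) {c : Fin n → G} {τ : G} (hc : ∀ k : Fin n, 2 * d - 4 ≤ k → c k = τ) :
    φ (lanternConjWord n d) c ⟨n - 4, by omega⟩ = φ (lanternConjWord n d) c ⟨n - 3, by omega⟩ := by
  rw [lanternConjWord_eq hd hn]
  simp only [map_mul, Equiv.Perm.mul_apply]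
  set T₁ := φ (braidDesc n (n - 3) (n - 2 * d + 3)) c with hT₁_def
  set T₂ := φ (braidAsc n (2 * d - 4) (n - 2 * d + 2)) T₁ with hT₂_def
  set T₃ := φ (braidGen n (2 * d - 5)) T₂ with hT₃_def
  set β := c ⟨2 * d - 5, by omega⟩ * τ * (c ⟨2 * d - 5, by omega⟩)⁻¹
  have hT₁ : ∀ k : Fin n, 2 * d - 5 ≤ k → k < n - 2 → T₁ k = β := by
    intro k h₁ h₂
    rw [hT₁_def, hφ.braidDesc_apply (lo := 2 * d - 5) (K := n - 2 * d + 3) (by omega) (by omega)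
      (fun k _ _ => hc k (by omega)), if_pos ⟨h₁, by omega⟩]
  have hT₂ : ∀ k : Fin n, 2 * d - 5 ≤ k → k ≠ 2 * d - 4 → k ≤ n - 2 → T₂ k = β := by
    intro k h₁ h₂ h₃
    rw [hT₂_def, hφ.braidAsc_apply (lo := 2 * d - 4) (K := n - 2 * d + 2) (by omega)
      (fun k h₁ h₂ => hT₁ k (by omega) (by omega)), if_neg h₂]
    split_ifs
    · rfl
    · exact hT₁ k h₁ (by omega)
  have hT₃ : ∀ k : Fin n, 2 * d - 5 < k → k ≤ n - 2 → T₃ k = β := by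
    intro k h₁ h₂
    rw [hT₃_def, hφ _ (by omega), hurwitzMove_apply (by omega), if_neg (by omega)]
    split_ifs with h
    · exact hT₂ _ le_rfl (by simp; omega) (by simp; omega)
    · exact hT₂ k (by omega) (by omega) h₂
  have hT₄ := hφ.braidDesc_apply (lo := 2 * d - 5) (K := n - 2 * d + 3) (top := n - 3)
    (by omega) (by omega) (fun k h₁ _ => hT₃ k h₁ (by omega))
  rw [hT₄, hT₄, if_pos ⟨by simp; omega, by simp; omega⟩, if_pos ⟨by simp; omega, by simp; omega⟩]

theorem lanternD_mul_inv_apply (hφ : IsHurwitzAction φ) {d : ℕ} (hd : 3 ≤ d)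
    (hn : 2 * d + 1 ≤ n) {c : Fin n → G} {τ : G} (hc : ∀ k : Fin n, 2 * d - 4 ≤ k → c k = τ) :
    φ (lanternD n d * (braidGen n (n - 2))⁻¹) c = c := by
  have hσ : φ (braidGen n (n - 2)) c = c := by
    rw [hφ _ (by omega)]
    exact hurwitzMove_eq_self _ c
      (by rw [hc ⟨n - 2, by omega⟩ (by simp; omega), hc ⟨n - 2 + 1, by omega⟩ (by simp; omega)])
  have hconj :
      φ (braidGen n (n - 4)) (φ (lanternConjWord n d) c) = φ (lanternConjWord n d) c := by
    rw [hφ _ (by omega)]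
    refine hurwitzMove_eq_self (by omega) _ ?_
    convert hφ.lanternConjWord_apply_eq hd hn hc using 3
    omega
  rw [map_mul, map_inv, Equiv.Perm.mul_apply, Equiv.Perm.inv_eq_iff_eq.mpr hσ.symm, lanternD,
    map_mul, map_mul, map_inv, Equiv.Perm.mul_apply, Equiv.Perm.mul_apply, hconj,
    Equiv.Perm.inv_eq_iff_eq]

end IsHurwitzAction

theorem stdTuple_apply_of_le {d n : ℕ} (hd : 2 ≤ d) (k : Fin n) (hk : 2 * d - 4 ≤ k) :
    stdTuple d n k = Equiv.swap ⟨0, by omega⟩ ⟨1, by omega⟩ := by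
  unfold stdTuple
  split_ifs with h
  · congr 1 <;> exact Fin.ext (by simp; omega)
  · rfl

/-- The element `d_{n-3} σ_{n-2}⁻¹` (the normal generator of the kernel of the
lifting homomorphism arising from the lantern relation) is liftable with
respect to the standard coloring: it fixes the standard tuple under the
Hurwitz action. -/
theorem lantern_element_liftable (d n : ℕ) (hd : 3 ≤ d) (hn : 2 * d + 1 ≤ n)
    (φ : BraidGroup n →* Equiv.Perm (Fin n → Equiv.Perm (Fin d)))
    (hφ : IsHurwitzAction φ) :
    φ (lanternD n d * (braidGen n (n - 2))⁻¹) (stdTuple d n) = stdTuple d n :=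
  hφ.lanternD_mul_inv_apply (τ := Equiv.swap ⟨0, by omega⟩ ⟨1, by omega⟩) hd hn
    (stdTuple_apply_of_le (by omega))
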